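/- arXiv:1504.04862 — 5 statements merged into one kernel-verified Lean document; each statement's English description precedes it below -/
import Mathlib

section
/- Let u : ℝ → ℝ be even, non-increasing on [0,∞), with ‖u‖_{L²(ℝ)} ≤ 1. Then the series bound ∫_{|x|>1/2} (e^{π u(x)²} − 1) dx ≤ π‖u‖²_{L²} · (1 + Σ_{k≥1} (π‖u‖²_{L²})^k / ((k+1)!·k)) holds; in particular ∫_{|x|>1/2}(e^{π u²} − 1) dx is bounded by a universal constant. -/
/-!
For `x > 0`, monotonicity gives `x * u x ^ 2 ≤ ∫_0^x u² ≤ ‖u‖² / 2`, so on `|x| > 1/2` we have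
`π u(x)² ≤ b / |x|` with `b = π ‖u‖² / 2`. Since `s ↦ eˢ - 1 - s` is increasing on `[0, ∞)`,
`e^{π u²} - 1 ≤ π u² + (e^{b/|x|} - 1 - b/|x|)`. Integrating the power series
`eˢ - 1 - s = ∑ s^(k+2) / (k+2)!` term by term, with
`∫_{1/2}^∞ (b/x)^(k+2) dx = (2b)^(k+2) / (2(k+1))`, produces the series on the right.
-/

open MeasureTheory Set Real
open scoped Nat

namespace Real

lemma hasSum_exp_sub_one_sub (s : ℝ) :
    HasSum (fun k : ℕ => s ^ (k + 2) / (k + 2)!) (exp s - 1 - s) := by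
  have h := NormedSpace.expSeries_div_hasSum_exp s
  rw [← exp_eq_exp_ℝ, ← hasSum_nat_add_iff' 2] at h
  simpa [Finset.sum_range_succ, sub_sub] using h

lemma exp_sub_one_sub_le_sq_mul_exp {s : ℝ} (hs : 0 ≤ s) :
    exp s - 1 - s ≤ s ^ 2 * exp s := by
  have h := NormedSpace.expSeries_div_hasSum_exp s
  rw [← exp_eq_exp_ℝ] at h
  refine hasSum_le (fun k => ?_) (hasSum_exp_sub_one_sub s) (h.mul_left (s ^ 2))
  rw [pow_add, mul_comm (s ^ k), mul_div_assoc]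
  gcongr
  omega

lemma exp_sub_one_le_add_exp_sub_one_sub {t s : ℝ} (ht : 0 ≤ t) (hts : t ≤ s) :
    exp t - 1 ≤ t + (exp s - 1 - s) := by
  have h₁ : s - t + 1 ≤ exp (s - t) := add_one_le_exp _
  have h₂ : exp s = exp t * exp (s - t) := by rw [← exp_add, add_sub_cancel]
  nlinarith [one_le_exp ht]

end Real

namespace Function.Even

variable {f : ℝ → ℝ}

lemma comp_abs (hf : f.Even) (x : ℝ) : f |x| = f x := by
  rcases abs_choice x with h | h <;> rw [h]
  exact hf x

lemma integral_eq_two_mul_integral_Ioi (hf : f.Even) :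
    ∫ x, f x = 2 * ∫ x in Ioi 0, f x := by
  simp_rw [← integral_comp_abs, hf.comp_abs]

lemma setIntegral_lt_abs (hf : f.Even) {c : ℝ} (hc : 0 ≤ c) :
    ∫ x in {x | c < |x|}, f x = 2 * ∫ x in Ioi c, f x := by
  have hS : MeasurableSet {x : ℝ | c < |x|} := measurableSet_lt measurable_const measurable_abs
  have hind : {x : ℝ | c < |x|}.indicator f = fun x => (Ioi c).indicator f |x| := by
    ext x
    simp only [indicator, mem_ofPred_eq, mem_Ioi, hf.comp_abs]
  rw [← integral_indicator hS, hind, integral_comp_abs, setIntegral_indicator measurableSet_Ioi,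
    Ioi_inter_Ioi, max_eq_right hc]

end Function.Even

lemma div_pow_eq_mul_rpow_neg (b : ℝ) {x : ℝ} (hx : 0 < x) (n : ℕ) :
    (b / x) ^ n = b ^ n * x ^ (-(n : ℝ)) := by
  rw [rpow_neg hx.le, rpow_natCast, div_pow, div_eq_mul_inv]

lemma neg_natCast_add_two_lt_neg_one (k : ℕ) : -((k + 2 : ℕ) : ℝ) < -1 := by
  push_cast
  linarith [k.cast_nonneg (α := ℝ)]

lemma integrableOn_Ioi_div_pow (b : ℝ) {c : ℝ} (hc : 0 < c) (k : ℕ) :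
    IntegrableOn (fun x : ℝ => (b / x) ^ (k + 2)) (Ioi c) := by
  have hk := neg_natCast_add_two_lt_neg_one k
  refine IntegrableOn.congr_fun ((integrableOn_Ioi_rpow_of_lt hk hc).const_mul (b ^ (k + 2)))
    (fun x hx => ?_) measurableSet_Ioi
  exact (div_pow_eq_mul_rpow_neg b (hc.trans hx) _).symm

lemma integral_Ioi_div_pow (b : ℝ) {c : ℝ} (hc : 0 < c) (k : ℕ) :
    ∫ x in Ioi c, (b / x) ^ (k + 2) = c * (b / c) ^ (k + 2) / (k + 1) := by
  have hk := neg_natCast_add_two_lt_neg_one k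
  have hk1 : -((k + 2 : ℕ) : ℝ) + 1 = -((k + 1 : ℕ) : ℝ) := by push_cast; ring
  rw [setIntegral_congr_fun measurableSet_Ioi
    fun x hx => div_pow_eq_mul_rpow_neg b (hc.trans hx) (k + 2), integral_const_mul,
    integral_Ioi_rpow_of_lt hk hc, hk1, rpow_neg hc.le, rpow_natCast]
  push_cast
  rw [div_pow]
  field_simp
  ring

lemma integrableOn_Ioi_exp_div_sub {b c : ℝ} (hb : 0 ≤ b) (hc : 0 < c) :
    IntegrableOn (fun x => exp (b / x) - 1 - b / x) (Ioi c) := by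
  have hmeas : Measurable fun x : ℝ => exp (b / x) - 1 - b / x := by fun_prop
  refine Integrable.mono' ((integrableOn_Ioi_div_pow b hc 0).const_mul (exp (b / c)))
    hmeas.aestronglyMeasurable ((ae_restrict_iff' measurableSet_Ioi).2 (.of_forall fun x hx => ?_))
  have hx0 : 0 < x := hc.trans hx
  have hs : 0 ≤ b / x := div_nonneg hb hx0.le
  rw [Real.norm_of_nonneg (by linarith [add_one_le_exp (b / x)])]
  calc exp (b / x) - 1 - b / x ≤ (b / x) ^ 2 * exp (b / x) := exp_sub_one_sub_le_sq_mul_exp hs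
    _ ≤ (b / x) ^ 2 * exp (b / c) := by gcongr; exact le_of_lt hx
    _ = exp (b / c) * (b / x) ^ (0 + 2) := by ring

lemma hasSum_integral_Ioi_exp_div_sub {b c : ℝ} (hb : 0 ≤ b) (hc : 0 < c) :
    HasSum (fun k : ℕ => c * (b / c) ^ (k + 2) / ((k + 2)! * (k + 1)))
      (∫ x in Ioi c, (exp (b / x) - 1 - b / x)) := by
  set F : ℕ → ℝ → ℝ := fun k x => (b / x) ^ (k + 2) / (k + 2)!
  have hF_int (k : ℕ) : IntegrableOn (F k) (Ioi c) :=
    (integrableOn_Ioi_div_pow b hc k).div_const _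
  have hF_integral (k : ℕ) :
      ∫ x in Ioi c, F k x = c * (b / c) ^ (k + 2) / ((k + 2)! * (k + 1)) := by
    rw [integral_div, integral_Ioi_div_pow b hc k, div_div, mul_comm ((k : ℝ) + 1)]
  have hF_norm (k : ℕ) : ∫ x in Ioi c, ‖F k x‖ = ∫ x in Ioi c, F k x :=
    setIntegral_congr_fun measurableSet_Ioi fun x hx =>
      Real.norm_of_nonneg (by have := hc.trans hx; positivity)
  have hsum : Summable fun k : ℕ => c * (b / c) ^ (k + 2) / ((k + 2)! * (k + 1)) := by
    refine ((hasSum_exp_sub_one_sub (b / c)).summable.mul_left c).of_nonneg_of_le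
      (fun k => by positivity) fun k => ?_
    rw [← mul_div_assoc]
    gcongr
    nlinarith [k.cast_nonneg (α := ℝ), (Nat.cast_pos (α := ℝ)).2 (k + 2).factorial_pos]
  have h := hasSum_integral_of_summable_integral_norm hF_int
    (by simpa only [hF_norm, hF_integral] using hsum)
  have hF_tsum (x : ℝ) : ∑' k, F k x = exp (b / x) - 1 - b / x :=
    (hasSum_exp_sub_one_sub (b / x)).tsum_eq
  simpa only [hF_integral, hF_tsum] using h

namespace AntitoneOn

variable {u : ℝ → ℝ}

lemma nonneg_of_integrableOn_sq (hmono : AntitoneOn u (Ici 0))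
    (hint : IntegrableOn (fun x => u x ^ 2) (Ioi 0)) {x : ℝ} (hx : 0 ≤ x) : 0 ≤ u x := by
  by_contra! hneg
  have hpos : 0 < u x ^ 2 := by nlinarith
  have hconst : IntegrableOn (fun _ => u x ^ 2) (Ioi x) := by
    refine Integrable.mono' (hint.mono_set (Ioi_subset_Ioi hx)) aestronglyMeasurable_const
      ((ae_restrict_iff' measurableSet_Ioi).2 (.of_forall fun y hy => ?_))
    have : u y ≤ u x := hmono hx (hx.trans (le_of_lt hy)) (le_of_lt hy)
    rw [Real.norm_of_nonneg hpos.le]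
    nlinarith
  simp [integrableOn_const_iff, hneg.ne] at hconst

lemma mul_sq_le_integral_Ioi (hmono : AntitoneOn u (Ici 0))
    (hint : IntegrableOn (fun x => u x ^ 2) (Ioi 0)) {x : ℝ} (hx : 0 < x) :
    x * u x ^ 2 ≤ ∫ y in Ioi 0, u y ^ 2 := by
  have hle : ∀ y ∈ Ioc 0 x, u x ^ 2 ≤ u y ^ 2 := fun y hy =>
    pow_le_pow_left₀ (hmono.nonneg_of_integrableOn_sq hint hx.le)
      (hmono (le_of_lt hy.1) hx.le hy.2) 2
  calc x * u x ^ 2 ≤ ∫ y in Ioc 0 x, u y ^ 2 := by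
        simpa [Real.volume_real_Ioc_of_le hx.le, mul_comm] using setIntegral_ge_of_const_le_real
          measurableSet_Ioc (by simp) hle (hint.mono_set Ioc_subset_Ioi_self)
    _ ≤ ∫ y in Ioi 0, u y ^ 2 := setIntegral_mono_set hint (.of_forall fun y => sq_nonneg _)
        Ioc_subset_Ioi_self.eventuallyLE

lemma setIntegral_Ioi_exp_mul_sq_sub_one_le (hmono : AntitoneOn u (Ici 0))
    (hint : IntegrableOn (fun x => u x ^ 2) (Ioi 0)) {c t : ℝ} (hc : 0 < c) (ht : 0 ≤ t) :
    ∫ x in Ioi c, (exp (t * u x ^ 2) - 1) ≤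
      t * (∫ y in Ioi 0, u y ^ 2) + ∫ x in Ioi c,
        (exp (t * (∫ y in Ioi 0, u y ^ 2) / x) - 1 - t * (∫ y in Ioi 0, u y ^ 2) / x) := by
  set J := ∫ y in Ioi 0, u y ^ 2
  have hJ : 0 ≤ J := setIntegral_nonneg measurableSet_Ioi fun _ _ => sq_nonneg _
  have hpt : ∀ x ∈ Ioi c,
      exp (t * u x ^ 2) - 1 ≤ t * u x ^ 2 + (exp (t * J / x) - 1 - t * J / x) := by
    intro x hx
    have hx0 : 0 < x := hc.trans hx
    refine exp_sub_one_le_add_exp_sub_one_sub (by positivity) ?_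
    rw [le_div_iff₀ hx0]
    nlinarith [hmono.mul_sq_le_integral_Ioi hint hx0]
  have hint_c : IntegrableOn (fun x => u x ^ 2) (Ioi c) := hint.mono_set (Ioi_subset_Ioi hc.le)
  have hG := integrableOn_Ioi_exp_div_sub (mul_nonneg ht hJ) hc
  calc ∫ x in Ioi c, (exp (t * u x ^ 2) - 1)
      ≤ ∫ x in Ioi c, (t * u x ^ 2 + (exp (t * J / x) - 1 - t * J / x)) :=
        integral_mono_of_nonneg
          (.of_forall fun x => sub_nonneg.2 (one_le_exp (by positivity)))
          ((hint_c.const_mul t).add hG) ((ae_restrict_iff' measurableSet_Ioi).2 (.of_forall hpt))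
    _ = t * (∫ x in Ioi c, u x ^ 2) + ∫ x in Ioi c, (exp (t * J / x) - 1 - t * J / x) := by
        rw [integral_add (hint_c.const_mul t) hG, integral_const_mul]
    _ ≤ t * J + ∫ x in Ioi c, (exp (t * J / x) - 1 - t * J / x) := by
        gcongr
        exact setIntegral_mono_set hint (.of_forall fun y => sq_nonneg _)
          (Ioi_subset_Ioi hc.le).eventuallyLE

end AntitoneOn

theorem stmt_5_general (u : ℝ → ℝ) (heven : ∀ x, u (-x) = u x)
    (hmono : AntitoneOn u (Set.Ici 0))
    (hint : Integrable (fun x => u x ^ 2)) :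
    (∫ x in {x : ℝ | |x| > 1/2}, (Real.exp (Real.pi * u x ^ 2) - 1)) ≤
      Real.pi * (∫ y, u y ^ 2) *
        (1 + ∑' k : ℕ, (Real.pi * ∫ y, u y ^ 2) ^ (k + 1) /
          ((Nat.factorial (k + 2) : ℝ) * (k + 1))) := by
  set I := ∫ y, u y ^ 2
  have hI : 0 ≤ I := integral_nonneg fun _ => sq_nonneg _
  have hhalf : ∫ y in Ioi 0, u y ^ 2 = I / 2 := by
    have hsq : (fun y => u y ^ 2).Even := fun y => by simp only [heven]
    have h := hsq.integral_eq_two_mul_integral_Ioi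
    linarith
  have hbound := hmono.setIntegral_Ioi_exp_mul_sq_sub_one_le hint.integrableOn
    one_half_pos pi_pos.le
  rw [hhalf, ← (hasSum_integral_Ioi_exp_div_sub (by positivity) one_half_pos).tsum_eq] at hbound
  have hexp : (fun x => exp (π * u x ^ 2) - 1).Even := fun x => by simp only [heven]
  rw [show {x : ℝ | |x| > 1/2} = {x | 1/2 < |x|} from rfl, hexp.setIntegral_lt_abs one_half_pos.le]
  calc 2 * ∫ x in Ioi (1 / 2), (exp (π * u x ^ 2) - 1)
      ≤ 2 * (π * (I / 2) + ∑' k : ℕ, 1 / 2 * (π * (I / 2) / (1 / 2)) ^ (k + 2) /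
          ((k + 2)! * (k + 1))) := by gcongr
    _ = π * I * (1 + ∑' k : ℕ, (π * I) ^ (k + 1) / ((k + 2)! * (k + 1))) := by
      rw [mul_add, mul_add, mul_one, ← tsum_mul_left, ← tsum_mul_left]
      congr 1
      · ring
      · congr 1 with k
        field_simp
        ring

theorem stmt_5 (u : ℝ → ℝ) (heven : ∀ x, u (-x) = u x)
    (hmono : AntitoneOn u (Set.Ici 0))
    (hint : Integrable (fun x => u x ^ 2))
    (hnorm : ∫ y, u y ^ 2 ≤ 1) :
    (∫ x in {x : ℝ | |x| > 1/2}, (Real.exp (Real.pi * u x ^ 2) - 1)) ≤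
      Real.pi * (∫ y, u y ^ 2) *
        (1 + ∑' k : ℕ, (Real.pi * ∫ y, u y ^ 2) ^ (k + 1) /
          ((Nat.factorial (k + 2) : ℝ) * (k + 1))) :=
  stmt_5_general u heven hmono hint
end

section
/- For any k ≥ 2 and any even function u : ℝ → ℝ non-increasing on [0,∞) with u ∈ L²(ℝ), one has ∫_{|x|>1/2} u(x)^{2k} dx ≤ ‖u‖_{L²(ℝ)}^{2k} / (k−1). -/
/-!
An antitone function that is negative somewhere is not square integrable on a half-line, so `u ≥ 0`;
being even and non-increasing in `|x|`, it then satisfies `u ^ 2 ≥ u x ^ 2` on `[-x, x]`, so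
`2 x u(x)² ≤ ‖u‖₂²`. Hence `u ^ (2k) ≤ (‖u‖₂² / 2) ^ k x ^ (-k)` on `(1/2, ∞)`, a majorant whose
integral there is `‖u‖₂^(2k) / (2 (k - 1))`; evenness doubles this to the integral over `{|x| > 1/2}`.
-/

open MeasureTheory Set

lemma Function.Even.comp_abs_s6 {α β : Type*} [AddGroup α] [LinearOrder α] {f : α → β}
    (hf : f.Even) (x : α) : f |x| = f x := by
  rcases abs_choice x with h | h <;> simp only [h, hf x]

lemma AntitoneOn.nonneg_of_integrable_sq {u : ℝ → ℝ} {a : ℝ} (hmono : AntitoneOn u (Ici a))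
    (hint : Integrable (fun x => u x ^ 2)) {x : ℝ} (hx : a ≤ x) : 0 ≤ u x := by
  by_contra! hneg
  have hsub : Ici x ⊆ {y | u x ^ 2 ≤ u y ^ 2} := fun y hy => by
    have : u y ≤ u x := hmono hx (hx.trans hy) hy
    show u x ^ 2 ≤ u y ^ 2
    nlinarith
  have hfin := hint.measure_ge_lt_top (ε := u x ^ 2) (by nlinarith)
  exact ((measure_mono hsub).trans_lt hfin).ne (by simp)

lemma sq_le_integral_sq_div {u : ℝ → ℝ} (heven : u.Even) (hmono : AntitoneOn u (Ici 0))
    (hint : Integrable (fun x => u x ^ 2)) {x : ℝ} (hx : 0 < x) :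
    u x ^ 2 ≤ (∫ y, u y ^ 2) / (2 * x) := by
  rw [le_div_iff₀ (by positivity)]
  calc u x ^ 2 * (2 * x) = ∫ _ in Icc (-x) x, u x ^ 2 := by
        rw [setIntegral_const, measureReal_def, Real.volume_Icc, smul_eq_mul,
          ENNReal.toReal_ofReal (by linarith)]
        ring
    _ ≤ ∫ y in Icc (-x) x, u y ^ 2 := by
        refine setIntegral_mono_on (integrableOn_const (by simp [Real.volume_Icc]))
          hint.integrableOn measurableSet_Icc fun y hy => ?_
        have hxy : u x ≤ u y := heven.comp_abs_s6 y ▸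
          hmono (abs_nonneg y) hx.le (abs_le.2 hy)
        exact pow_le_pow_left₀ (hmono.nonneg_of_integrable_sq hint hx.le) hxy 2
    _ ≤ ∫ y, u y ^ 2 := setIntegral_le_integral hint (ae_of_all _ fun y => sq_nonneg _)

lemma integral_Ioi_rpow_neg_natCast {k : ℕ} (hk : 1 < k) {c : ℝ} (hc : 0 < c) :
    ∫ x in Ioi c, x ^ (-(k : ℝ)) = c / ((k - 1) * c ^ k) := by
  have hk' : (1 : ℝ) < k := by exact_mod_cast hk
  rw [integral_Ioi_rpow_of_lt (by linarith) hc, Real.rpow_add hc, Real.rpow_neg hc.le,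
    Real.rpow_natCast, Real.rpow_one, show -(k : ℝ) + 1 = -(k - 1) by ring, neg_div_neg_eq]
  have : (k : ℝ) - 1 ≠ 0 := by linarith
  field_simp

lemma Function.Even.setIntegral_abs_gt {f : ℝ → ℝ} (hf : f.Even) {a : ℝ} (ha : 0 ≤ a) :
    ∫ x in {x | a < |x|}, f x = 2 * ∫ x in Ioi a, f x := by
  have hmeas : MeasurableSet {x : ℝ | a < |x|} :=
    measurableSet_lt measurable_const continuous_abs.measurable
  have hind : {x : ℝ | a < |x|}.indicator f = fun x => (Ioi a).indicator f |x| := by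
    ext x
    by_cases h : a < |x|
    · rw [indicator_of_mem (by exact h), indicator_of_mem (by exact h), hf.comp_abs_s6]
    · rw [indicator_of_notMem (by exact h), indicator_of_notMem (by exact h)]
  rw [← integral_indicator hmeas, hind, integral_comp_abs,
    setIntegral_indicator measurableSet_Ioi, Ioi_inter_Ioi, max_eq_right ha]

theorem stmt_6 (u : ℝ → ℝ) (heven : ∀ x, u (-x) = u x)
    (hmono : AntitoneOn u (Set.Ici 0))
    (hint : Integrable (fun x => u x ^ 2))
    (k : ℕ) (hk : 2 ≤ k) :
    (∫ x in {x : ℝ | |x| > 1/2}, u x ^ (2 * k)) ≤ (∫ y, u y ^ 2) ^ k / (k - 1 : ℝ) := by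
  set I := ∫ y, u y ^ 2
  have hk1 : (1 : ℝ) < k := by exact_mod_cast hk
  have hbound : ∀ x ∈ Ioi (1 / 2 : ℝ), u x ^ (2 * k) ≤ (I / 2) ^ k * x ^ (-(k : ℝ)) := by
    intro x hx
    have hx0 : 0 < x := lt_trans one_half_pos hx
    calc u x ^ (2 * k) = (u x ^ 2) ^ k := pow_mul _ _ _
      _ ≤ (I / (2 * x)) ^ k :=
          pow_le_pow_left₀ (sq_nonneg _) (sq_le_integral_sq_div heven hmono hint hx0) k
      _ = (I / 2) ^ k * x ^ (-(k : ℝ)) := by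
          rw [Real.rpow_neg hx0.le, Real.rpow_natCast, div_mul_eq_div_div, div_pow, div_eq_mul_inv]
  have hmajorant : IntegrableOn (fun x => (I / 2) ^ k * x ^ (-(k : ℝ))) (Ioi (1 / 2)) :=
    (integrableOn_Ioi_rpow_of_lt (by linarith) one_half_pos).const_mul _
  have hpow_int : IntegrableOn (fun x => u x ^ (2 * k)) (Ioi (1 / 2)) := by
    refine hmajorant.mono' ?_ ((ae_restrict_iff' measurableSet_Ioi).2 (ae_of_all _ fun x hx => ?_))
    · simp_rw [pow_mul]
      exact (hint.aestronglyMeasurable.pow k).restrict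
    · rw [Real.norm_of_nonneg ((even_two_mul k).pow_nonneg _)]
      exact hbound x hx
  calc ∫ x in {x : ℝ | 1 / 2 < |x|}, u x ^ (2 * k)
      = 2 * ∫ x in Ioi (1 / 2), u x ^ (2 * k) :=
        (Function.Even.left_comp heven (· ^ (2 * k))).setIntegral_abs_gt one_half_pos.le
    _ ≤ 2 * ∫ x in Ioi (1 / 2), (I / 2) ^ k * x ^ (-(k : ℝ)) := by
        gcongr 2 * ?_
        exact setIntegral_mono_on hpow_int hmajorant measurableSet_Ioi hbound
    _ = I ^ k / (k - 1) := by
        rw [integral_const_mul, integral_Ioi_rpow_neg_natCast (by omega) one_half_pos]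
        have : (k : ℝ) - 1 ≠ 0 := by linarith
        field_simp
        ring
end

section
/- Let p > 1, τ ≥ 1, r = e^{−τ}/2, and for 0 < x ≤ r define u₁(x) = (1/(2τ)) [ ∫_r^{1/2} dy/((y−x)^{1−1/p} y^{1/p}) + ∫_{−1/2}^{−r} dy/(|y−x|^{1−1/p}|y|^{1/p}) ]. Then u₁(x) ≥ (1/(2τ)) (2τ + log((1+2x)/(1+x/r))), and in particular u₁(x) ≥ 1 − C/τ for a constant C independent of x ∈ (0, r] and τ. -/
open MeasureTheory Real

theorem stmt_10 (p : ℝ) (hp : 1 < p) :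
    ∃ C : ℝ, ∀ tau : ℝ, 1 ≤ tau → ∀ x : ℝ, 0 < x → x ≤ Real.exp (-tau) / 2 →
      let r := Real.exp (-tau) / 2
      let u₁ := (1 / (2 * tau)) *
        ((∫ y in Set.Icc r (1/2 : ℝ), 1 / ((y - x) ^ (1 - 1/p) * y ^ (1/p))) +
         (∫ y in Set.Icc (-(1/2) : ℝ) (-r), 1 / (|y - x| ^ (1 - 1/p) * |y| ^ (1/p))))
      u₁ ≥ (1 / (2 * tau)) * (2 * tau + Real.log ((1 + 2 * x) / (1 + x / r))) ∧
      u₁ ≥ 1 - C / tau := by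
  refine ⟨Real.log 2 / 2, fun tau htau x hx hxr => ?_⟩
  intro r u₁
  have htau0 : (0:ℝ) < tau := lt_of_lt_of_le one_pos htau
  have hr0 : (0:ℝ) < r := by positivity
  have hrhalf : r < 1/2 := by
    have : Real.exp (-tau) < 1 := Real.exp_lt_one_iff.mpr (by linarith)
    simp only [r]; linarith
  have hxr' : x ≤ r := hxr
  have hp0 : (0:ℝ) < 1/p := by positivity
  have hp1 : 1/p < 1 := by
    rw [div_lt_one (by linarith)]; linarith
  have he1 : (0:ℝ) < 1 - 1/p := by linarith
  -- the two integrands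
  set g₁ : ℝ → ℝ := fun y => 1 / ((y - x) ^ (1 - 1/p) * y ^ (1/p)) with hg₁
  set g₂ : ℝ → ℝ := fun y => 1 / (|y - x| ^ (1 - 1/p) * |y| ^ (1/p)) with hg₂
  have hle : r ≤ (1/2:ℝ) := hrhalf.le
  -- integrability of g₁ on Ioc r (1/2)
  have hintg₁ : IntegrableOn g₁ (Set.Ioc r (1/2)) := by
    have h1 : IntervalIntegrable (fun y => (y - x) ^ (1/p - 1)) volume r (1/2) := by
      have := (intervalIntegral.intervalIntegrable_rpow' (a := r - x) (b := 1/2 - x)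
        (r := 1/p - 1) (by linarith)).comp_sub_right x
      simpa using this
    have h2 : IntegrableOn (fun y => (y - x) ^ (1/p - 1) * r ^ (-(1/p)))
        (Set.Ioc r (1/2)) := by
      have := (intervalIntegrable_iff_integrableOn_Ioc_of_le hle).mp h1
      exact this.mul_const _
    refine h2.mono' ?_ ?_
    · apply Measurable.aestronglyMeasurable
      have hcont : Continuous fun y : ℝ => (y - x) ^ (1 - 1/p) * y ^ (1/p) :=
        ((continuous_id.sub continuous_const).rpow_const (fun _ => Or.inr he1.le)).mul
          (continuous_id.rpow_const fun _ => Or.inr hp0.le)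
      simp only [hg₁]
      exact measurable_const.div hcont.measurable
    · filter_upwards [self_mem_ae_restrict measurableSet_Ioc] with y hy
      have hyx : 0 < y - x := by linarith [hy.1]
      have hy0 : 0 < y := lt_trans hr0 hy.1
      have h3 : g₁ y = (y - x) ^ (1/p - 1) * y ^ (-(1/p)) := by
        simp only [hg₁]
        have e : (1:ℝ)/p - 1 = -(1 - 1/p) := by ring
        rw [e, Real.rpow_neg hyx.le, Real.rpow_neg hy0.le, ← mul_inv]
        exact one_div _
      rw [Real.norm_eq_abs, h3, abs_of_nonneg (by positivity)]
      have : y ^ (-(1/p)) ≤ r ^ (-(1/p)) :=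
        Real.rpow_le_rpow_of_nonpos hr0 hy.1.le (by linarith)
      have h4 : 0 ≤ (y - x) ^ (1/p - 1) := by positivity
      exact mul_le_mul_of_nonneg_left this h4
  -- lower bound for I₁
  have hI₁ : tau ≤ ∫ y in Set.Icc r (1/2:ℝ), g₁ y := by
    rw [MeasureTheory.integral_Icc_eq_integral_Ioc]
    have hf : IntegrableOn (fun y => 1/y) (Set.Ioc r (1/2)) := by
      apply IntegrableOn.mono_set _ Set.Ioc_subset_Icc_self
      apply ContinuousOn.integrableOn_Icc
      apply ContinuousOn.div continuousOn_const continuousOn_id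
      intro y hy; exact ne_of_gt (lt_of_lt_of_le hr0 hy.1)
    have hmono : ∫ y in Set.Ioc r (1/2:ℝ), 1/y ≤ ∫ y in Set.Ioc r (1/2:ℝ), g₁ y := by
      apply setIntegral_mono_on hf hintg₁ measurableSet_Ioc
      intro y hy
      have hyx : 0 < y - x := by linarith [hy.1]
      have hy0 : 0 < y := lt_trans hr0 hy.1
      have hden : (y - x) ^ (1 - 1/p) * y ^ (1/p) ≤ y := by
        calc (y - x) ^ (1 - 1/p) * y ^ (1/p)
            ≤ y ^ (1 - 1/p) * y ^ (1/p) :=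
              mul_le_mul_of_nonneg_right
                (Real.rpow_le_rpow hyx.le (by linarith) he1.le) (by positivity)
          _ = y := by rw [← Real.rpow_add hy0]; norm_num
      have hden0 : 0 < (y - x) ^ (1 - 1/p) * y ^ (1/p) := by positivity
      exact one_div_le_one_div_of_le hden0 hden
    have hval : ∫ y in Set.Ioc r (1/2:ℝ), 1/y = tau := by
      rw [← intervalIntegral.integral_of_le hle, integral_one_div]
      · have : (1/2 : ℝ) / r = Real.exp tau := by
          simp only [r, Real.exp_neg]
          field_simp
        rw [this, Real.log_exp]
      · intro h
        rw [Set.mem_uIcc] at h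
        rcases h with ⟨h1, _⟩ | ⟨_, h2⟩ <;> linarith
    linarith
  -- lower bound for I₂
  have hxround : ∀ y ∈ Set.Icc (-(1/2):ℝ) (-r), (0:ℝ) < x - y := by
    intro y hy; have := hy.2; linarith
  have hintg₂ : IntegrableOn g₂ (Set.Icc (-(1/2):ℝ) (-r)) := by
    apply ContinuousOn.integrableOn_Icc
    apply ContinuousOn.div continuousOn_const
    · apply ContinuousOn.mul
      · apply ContinuousOn.rpow_const (Continuous.continuousOn (by continuity))
        intro y hy; right; linarith
      · apply ContinuousOn.rpow_const (Continuous.continuousOn (by continuity))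
        intro y hy; right; linarith
    · intro y hy
      have h1 : 0 < x - y := hxround y hy
      have h2 : 0 < -y := by have := hy.2; linarith
      have : 0 < |y - x| ^ (1 - 1/p) * |y| ^ (1/p) := by
        apply mul_pos <;> apply Real.rpow_pos_of_pos <;> rw [abs_pos]
        · intro h; rw [sub_eq_zero] at h; subst h; linarith
        · intro h; subst h; linarith
      exact ne_of_gt this
  have hI₂ : tau + Real.log ((1 + 2*x) / (1 + x/r)) ≤ ∫ y in Set.Icc (-(1/2):ℝ) (-r), g₂ y := by
    have hf : IntegrableOn (fun y => 1/(x - y)) (Set.Icc (-(1/2):ℝ) (-r)) := by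
      apply ContinuousOn.integrableOn_Icc
      apply ContinuousOn.div continuousOn_const (by fun_prop)
      intro y hy; exact ne_of_gt (hxround y hy)
    have hmono : ∫ y in Set.Icc (-(1/2):ℝ) (-r), 1/(x - y)
        ≤ ∫ y in Set.Icc (-(1/2):ℝ) (-r), g₂ y := by
      apply setIntegral_mono_on hf hintg₂ measurableSet_Icc
      intro y hy
      have h1 : 0 < x - y := hxround y hy
      have h2 : 0 < -y := by have := hy.2; linarith
      have habs1 : |y - x| = x - y := by rw [abs_sub_comm, abs_of_pos h1]
      have habs2 : |y| = -y := abs_of_neg (by linarith)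
      have hden : |y - x| ^ (1 - 1/p) * |y| ^ (1/p) ≤ x - y := by
        rw [habs1, habs2]
        calc (x - y) ^ (1 - 1/p) * (-y) ^ (1/p)
            ≤ (x - y) ^ (1 - 1/p) * (x - y) ^ (1/p) :=
              mul_le_mul_of_nonneg_left
                (Real.rpow_le_rpow h2.le (by linarith) hp0.le) (by positivity)
          _ = x - y := by rw [← Real.rpow_add h1]; norm_num
      have hden0 : 0 < |y - x| ^ (1 - 1/p) * |y| ^ (1/p) := by
        rw [habs1, habs2]; positivity
      exact one_div_le_one_div_of_le hden0 hden
    have h2r : 2 * r = Real.exp (-tau) := by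
      show 2 * (Real.exp (-tau) / 2) = _; ring
    have hval : ∫ y in Set.Icc (-(1/2):ℝ) (-r), 1/(x - y)
        = tau + Real.log ((1 + 2*x) / (1 + x/r)) := by
      rw [MeasureTheory.integral_Icc_eq_integral_Ioc,
        ← intervalIntegral.integral_of_le (by linarith : -(1/2:ℝ) ≤ -r)]
      rw [intervalIntegral.integral_comp_sub_left (fun u => 1/u) x]
      rw [integral_one_div]
      · have hrne : r ≠ 0 := ne_of_gt hr0
        have hxrne : x - -r ≠ 0 := ne_of_gt (by linarith)
        have hone : 1 + x/r ≠ 0 := by positivity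
        have key : (1 + 2*x) / (1 + x/r) = (2*r) * ((x - -(1/2)) / (x - -r)) := by
          field_simp
          ring
        rw [key, Real.log_mul (by positivity) (ne_of_gt (div_pos (by linarith) (by linarith))), h2r, Real.log_exp]
        ring
      · intro h
        rw [Set.mem_uIcc] at h
        have hxr2 : 0 < x - -r := by linarith
        have hx12 : 0 < x - -(1/2:ℝ) := by linarith
        rcases h with ⟨h1, _⟩ | ⟨_, h2⟩ <;> linarith
    linarith
  -- combine
  have hL : -Real.log 2 ≤ Real.log ((1 + 2*x) / (1 + x/r)) := by
    rw [← Real.log_inv]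
    apply Real.log_le_log (by positivity)
    rw [le_div_iff₀ (by positivity)]
    have ht : x / r ≤ 1 := (div_le_one hr0).mpr hxr'
    linarith
  have hpos : (0:ℝ) < 1 / (2 * tau) := by positivity
  constructor
  · have hsum : 2 * tau + Real.log ((1 + 2*x) / (1 + x/r))
        ≤ (∫ y in Set.Icc r (1/2:ℝ), g₁ y) + ∫ y in Set.Icc (-(1/2):ℝ) (-r), g₂ y := by
      linarith
    exact mul_le_mul_of_nonneg_left hsum hpos.le
  · have h1 : 1 - (Real.log 2 / 2) / tau
        ≤ (1 / (2 * tau)) * (2 * tau + Real.log ((1 + 2*x) / (1 + x/r))) := by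
      rw [mul_add]
      have e1 : (1 / (2 * tau)) * (2 * tau) = 1 := by field_simp
      have e2 : -((Real.log 2 / 2) / tau) ≤ (1 / (2 * tau)) * Real.log ((1 + 2*x) / (1 + x/r)) := by
        have : (1 / (2 * tau)) * (-Real.log 2) ≤ (1 / (2 * tau)) * Real.log ((1 + 2*x) / (1 + x/r)) :=
          mul_le_mul_of_nonneg_left hL hpos.le
        calc -((Real.log 2 / 2) / tau) = (1 / (2 * tau)) * (-Real.log 2) := by ring
          _ ≤ _ := this
      linarith [e2, e1.ge]
    have hsum : 2 * tau + Real.log ((1 + 2*x) / (1 + x/r))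
        ≤ (∫ y in Set.Icc r (1/2:ℝ), g₁ y) + ∫ y in Set.Icc (-(1/2):ℝ) (-r), g₂ y := by
      linarith
    have h2 := mul_le_mul_of_nonneg_left hsum hpos.le
    calc (1:ℝ) - (Real.log 2 / 2) / tau ≤ _ := h1
      _ ≤ u₁ := h2
end

section
/- Let I = (−1, 1), s ∈ (0,1), and let v : ℝ → ℝ be defined by v(x) = u(x) − u(1/2) for |x| ≤ 1/2 and v(x) = 0 for |x| > 1/2, where u : ℝ → ℝ is even and non-increasing on [0,∞) with finite Gagliardo seminorm [u]_{W^{1/2,2}(ℝ)}. Then [v]_{W^{1/2,2}(ℝ)} ≤ [u]_{W^{1/2,2}(ℝ)}. -/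
open MeasureTheory

theorem stmt_14 (u v : ℝ → ℝ) (heven : ∀ x, u (-x) = u x)
    (hmono : AntitoneOn u (Set.Ici 0))
    (hfin : (∫⁻ x, ∫⁻ y, ENNReal.ofReal ((u x - u y) ^ 2 / (x - y) ^ 2)) < ⊤)
    (hv : v = fun x => if |x| ≤ 1/2 then u x - u (1/2) else 0) :
    (∫⁻ x, ∫⁻ y, ENNReal.ofReal ((v x - v y) ^ 2 / (x - y) ^ 2)) ≤
      (∫⁻ x, ∫⁻ y, ENNReal.ofReal ((u x - u y) ^ 2 / (x - y) ^ 2)) := by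
  have habs : ∀ x : ℝ, u |x| = u x := by
    intro x
    rcases le_or_gt 0 x with h | h
    · rw [abs_of_nonneg h]
    · rw [abs_of_neg h, heven]
  have key : ∀ x y : ℝ, (v x - v y) ^ 2 ≤ (u x - u y) ^ 2 := by
    intro x y
    subst hv
    simp only
    by_cases hx : |x| ≤ 1/2 <;> by_cases hy : |y| ≤ 1/2
    · rw [if_pos hx, if_pos hy]; ring_nf; exact le_refl _
    · rw [if_pos hx, if_neg hy]
      have h1 : u (1/2) ≤ u x := by
        rw [← habs x]; exact hmono (abs_nonneg x) (by norm_num) hx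
      have h2 : u y ≤ u (1/2) := by
        rw [← habs y]; exact hmono (by norm_num) (abs_nonneg y) (le_of_lt (not_le.mp hy))
      have h0 : 0 ≤ u x - u (1/2) := by linarith
      have h3 : u x - u (1/2) ≤ u x - u y := by linarith
      simpa using pow_le_pow_left₀ h0 h3 2
    · rw [if_neg hx, if_pos hy]
      have h1 : u (1/2) ≤ u y := by
        rw [← habs y]; exact hmono (abs_nonneg y) (by norm_num) hy
      have h2 : u x ≤ u (1/2) := by
        rw [← habs x]; exact hmono (by norm_num) (abs_nonneg x) (le_of_lt (not_le.mp hx))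
      have h0 : 0 ≤ u y - u (1/2) := by linarith
      have h3 : u y - u (1/2) ≤ u y - u x := by linarith
      calc (0 - (u y - u (1/2))) ^ 2 = (u y - u (1/2)) ^ 2 := by ring
        _ ≤ (u y - u x) ^ 2 := pow_le_pow_left₀ h0 h3 2
        _ = (u x - u y) ^ 2 := by ring
    · rw [if_neg hx, if_neg hy]; simpa using sq_nonneg (u x - u y)
  refine lintegral_mono fun x => lintegral_mono fun y => ENNReal.ofReal_le_ofReal ?_
  rcases eq_or_ne ((x - y) ^ 2) 0 with h | h
  · simp [h]
  · have hpos : 0 < (x - y) ^ 2 := lt_of_le_of_ne (sq_nonneg _) (Ne.symm h)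
    exact div_le_div_of_nonneg_right (key x y) hpos.le
end

section
/- Let f : (0,∞) → ℝ be defined by f(t) = t²(A − λ∫_I u² e^{t²u²/2} dx) where A = ‖u‖²_H, λ > 0, u ∈ L²(I)∖{0} with u² e^{t²u²/2} ∈ L¹(I) for all t, A − λ∫_I u² dx > 0, and ∫_I u⁴ dx > 0. Then: (a) f(t) > 0 for all sufficiently small t > 0; (b) f(t) → −∞ as t → ∞; (c) the map t ↦ ∫_I u² e^{t²u²/2} dx is strictly increasing on (0,∞); consequently there is a unique t₀ > 0 with f(t₀) = 0. -/
open MeasureTheory Filter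

/-!
Write `g t = ∫ u² e^{t²u²/2}`, so that `f t = t² (A - λ g t)`. Dominated convergence makes `g`
continuous; `g` is strictly increasing on `(0, ∞)` because `u ≠ 0` on a set of positive measure
(as `∫ u⁴ > 0`); and `e^s ≥ s` gives `g t ≥ (t²/2) ∫ u⁴`. Hence `f > 0` near `0` (since
`λ g 0 = λ ∫ u² < A`) and `f → -∞`, so `f` has a positive zero by the intermediate value theorem.
Positive zeros of `f` are the solutions of `g t = A / λ`, of which there is at most one.
-/

open Real Set

section ExpMoment

variable {α : Type*} [MeasurableSpace α] {μ : Measure α} {u : α → ℝ}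

theorem integral_lt_integral_of_ae_le_of_measure_setOf_lt_ne_zero {f g : α → ℝ}
    (hfi : Integrable f μ) (hgi : Integrable g μ) (hle : f ≤ᵐ[μ] g)
    (hlt : μ {x | f x < g x} ≠ 0) :
    ∫ x, f x ∂μ < ∫ x, g x ∂μ := by
  rw [← sub_pos, ← integral_sub hgi hfi, integral_pos_iff_support_of_nonneg_ae
    (hle.mono fun x => sub_nonneg.2) (hgi.sub hfi)]
  exact pos_iff_ne_zero.2 (mt (measure_mono_null fun x hx => (sub_pos.2 hx).ne') hlt)

theorem measure_support_ne_zero_of_integral_pow_ne_zero {n : ℕ} (hn : n ≠ 0)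
    (h : ∫ x, u x ^ n ∂μ ≠ 0) : μ (Function.support u) ≠ 0 := by
  contrapose! h
  refine integral_eq_zero_of_ae ?_
  filter_upwards [measure_eq_zero_iff_ae_notMem.1 h] with x hx
  simp_all

theorem sq_mul_exp_le_of_sq_le {s t : ℝ} (h : s ^ 2 ≤ t ^ 2) (y : ℝ) :
    y ^ 2 * exp (s ^ 2 * y ^ 2 / 2) ≤ y ^ 2 * exp (t ^ 2 * y ^ 2 / 2) := by
  gcongr

theorem sq_mul_exp_lt_of_sq_lt {s t : ℝ} (h : s ^ 2 < t ^ 2) {y : ℝ} (hy : y ≠ 0) :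
    y ^ 2 * exp (s ^ 2 * y ^ 2 / 2) < y ^ 2 * exp (t ^ 2 * y ^ 2 / 2) := by
  have : 0 < y ^ 2 := by positivity
  gcongr

theorem mul_pow_four_le_sq_mul_exp (t y : ℝ) :
    t ^ 2 / 2 * y ^ 4 ≤ y ^ 2 * exp (t ^ 2 * y ^ 2 / 2) :=
  calc t ^ 2 / 2 * y ^ 4 = y ^ 2 * (t ^ 2 * y ^ 2 / 2) := by ring
    _ ≤ y ^ 2 * exp (t ^ 2 * y ^ 2 / 2) := by
      gcongr; linarith [add_one_le_exp (t ^ 2 * y ^ 2 / 2)]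

theorem continuous_integral_sq_mul_exp
    (hint : ∀ t : ℝ, Integrable (fun x => u x ^ 2 * exp (t ^ 2 * u x ^ 2 / 2)) μ) :
    Continuous fun t : ℝ => ∫ x, u x ^ 2 * exp (t ^ 2 * u x ^ 2 / 2) ∂μ := by
  refine continuous_iff_continuousAt.2 fun t₀ => continuousAt_of_dominated
    (bound := fun x => u x ^ 2 * exp ((|t₀| + 1) ^ 2 * u x ^ 2 / 2))
    (Eventually.of_forall fun t => (hint t).aestronglyMeasurable) ?_ (hint _)
    (ae_of_all _ fun x => by fun_prop)
  filter_upwards [Metric.ball_mem_nhds t₀ one_pos] with t ht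
  have hsq : t ^ 2 ≤ (|t₀| + 1) ^ 2 := by
    rw [Metric.mem_ball, Real.dist_eq] at ht
    rw [sq_le_sq, abs_of_nonneg (by positivity : (0 : ℝ) ≤ |t₀| + 1)]
    linarith [abs_sub_abs_le_abs_sub t t₀]
  exact ae_of_all _ fun x => by
    rw [Real.norm_of_nonneg (by positivity)]
    exact sq_mul_exp_le_of_sq_le hsq (u x)

theorem strictMonoOn_integral_sq_mul_exp
    (hint : ∀ t : ℝ, Integrable (fun x => u x ^ 2 * exp (t ^ 2 * u x ^ 2 / 2)) μ)
    (hu : μ (Function.support u) ≠ 0) :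
    StrictMonoOn (fun t : ℝ => ∫ x, u x ^ 2 * exp (t ^ 2 * u x ^ 2 / 2) ∂μ) (Ioi 0) := by
  intro s hs t _ hst
  have hsq : s ^ 2 < t ^ 2 := by gcongr; exact le_of_lt hs
  exact integral_lt_integral_of_ae_le_of_measure_setOf_lt_ne_zero (hint s) (hint t)
    (ae_of_all _ fun x => sq_mul_exp_le_of_sq_le hsq.le (u x))
    (mt (measure_mono_null fun x hx => sq_mul_exp_lt_of_sq_lt hsq hx) hu)

theorem half_integral_pow_four_mul_sq_le_integral_sq_mul_exp (t : ℝ)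
    (hint4 : Integrable (fun x => u x ^ 4) μ)
    (hint : Integrable (fun x => u x ^ 2 * exp (t ^ 2 * u x ^ 2 / 2)) μ) :
    (∫ x, u x ^ 4 ∂μ) / 2 * t ^ 2 ≤ ∫ x, u x ^ 2 * exp (t ^ 2 * u x ^ 2 / 2) ∂μ :=
  calc (∫ x, u x ^ 4 ∂μ) / 2 * t ^ 2 = ∫ x, t ^ 2 / 2 * u x ^ 4 ∂μ := by
        rw [integral_const_mul]; ring
    _ ≤ _ := integral_mono (hint4.const_mul _) hint fun x => mul_pow_four_le_sq_mul_exp t (u x)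

end ExpMoment

section FiberMap

variable {g : ℝ → ℝ} {A lam : ℝ}

theorem exists_pos_sq_mul_sub_of_continuousAt (hg : ContinuousAt g 0) (h0 : lam * g 0 < A) :
    ∃ ε > 0, ∀ t ∈ Ioo 0 ε, 0 < t ^ 2 * (A - lam * g t) := by
  obtain ⟨ε, hε, hball⟩ := Metric.eventually_nhds_iff.1
    ((continuousAt_const.mul hg).eventually_lt continuousAt_const h0)
  refine ⟨ε, hε, fun t ht => mul_pos (pow_pos ht.1 2) (sub_pos.2 (hball ?_))⟩
  rw [Real.dist_eq, sub_zero, abs_of_pos ht.1]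
  exact ht.2

theorem tendsto_sq_mul_sub_atBot (hlam : 0 < lam) {c : ℝ} (hc : 0 < c)
    (hg : ∀ t, c * t ^ 2 ≤ g t) :
    Tendsto (fun t => t ^ 2 * (A - lam * g t)) atTop atBot := by
  have hsq : Tendsto (fun t : ℝ => t ^ 2) atTop atTop := tendsto_pow_atTop two_ne_zero
  have hbound : Tendsto (fun t : ℝ => t ^ 2 * (A + -(lam * c) * t ^ 2)) atTop atBot :=
    hsq.atTop_mul_atBot₀ (tendsto_atBot_add_const_left _ A
      (hsq.const_mul_atTop_of_neg (neg_neg_of_pos (mul_pos hlam hc))))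
  refine tendsto_atBot_mono (fun t => ?_) hbound
  rw [neg_mul, ← sub_eq_add_neg, mul_assoc]
  gcongr
  exact hg t

theorem existsUnique_pos_sq_mul_sub_eq_zero (hg : Continuous g) (hmono : StrictMonoOn g (Ioi 0))
    (hlam : lam ≠ 0) {a : ℝ} (ha : 0 < a) (hfa : 0 < a ^ 2 * (A - lam * g a))
    (hbot : Tendsto (fun t => t ^ 2 * (A - lam * g t)) atTop atBot) :
    ∃! t₀ : ℝ, 0 < t₀ ∧ t₀ ^ 2 * (A - lam * g t₀) = 0 := by
  have hzero : ∀ t : ℝ, 0 < t → t ^ 2 * (A - lam * g t) = 0 → lam * g t = A := fun t ht h => by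
    simpa [ht.ne', sub_eq_zero, eq_comm] using h
  obtain ⟨t₀, ht₀, hft₀⟩ := intermediate_value_Ici' (by fun_prop) hbot hfa.le
  have ht₀_pos : 0 < t₀ := ha.trans_le ht₀
  refine ⟨t₀, ⟨ht₀_pos, hft₀⟩, fun s ⟨hs, hfs⟩ => hmono.injOn hs ht₀_pos ?_⟩
  exact mul_left_cancel₀ hlam ((hzero s hs hfs).trans (hzero t₀ ht₀_pos hft₀).symm)

end FiberMap

theorem stmt_18_general (I : Set ℝ)
    (u : ℝ → ℝ) (A lam : ℝ) (hlam : 0 < lam)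
    (hint : ∀ t : ℝ, IntegrableOn (fun x => u x ^ 2 * Real.exp (t ^ 2 * u x ^ 2 / 2)) I)
    (hint4 : IntegrableOn (fun x => u x ^ 4) I)
    (hu4 : 0 < ∫ x in I, u x ^ 4)
    (hA : lam * ∫ x in I, u x ^ 2 < A)
    (f : ℝ → ℝ)
    (hf : f = fun t => t ^ 2 * (A - lam * ∫ x in I, u x ^ 2 * Real.exp (t ^ 2 * u x ^ 2 / 2))) :
    (∃ ε > (0:ℝ), ∀ t ∈ Set.Ioo (0:ℝ) ε, 0 < f t) ∧
    Tendsto f atTop atBot ∧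
    StrictMonoOn (fun t => ∫ x in I, u x ^ 2 * Real.exp (t ^ 2 * u x ^ 2 / 2)) (Set.Ioi 0) ∧
    ∃! t₀ : ℝ, 0 < t₀ ∧ f t₀ = 0 := by
  subst hf
  have hcont := continuous_integral_sq_mul_exp hint
  have hmono := strictMonoOn_integral_sq_mul_exp hint
    (measure_support_ne_zero_of_integral_pow_ne_zero four_ne_zero hu4.ne')
  obtain ⟨ε, hε, hpos⟩ := exists_pos_sq_mul_sub_of_continuousAt hcont.continuousAt
    (by simpa using hA)
  have hbot := tendsto_sq_mul_sub_atBot (A := A) hlam (half_pos hu4)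
    fun t => half_integral_pow_four_mul_sq_le_integral_sq_mul_exp t hint4 (hint t)
  exact ⟨⟨ε, hε, hpos⟩, hbot, hmono, existsUnique_pos_sq_mul_sub_eq_zero hcont hmono hlam.ne'
    (half_pos hε) (hpos _ ⟨half_pos hε, half_lt_self hε⟩) hbot⟩

theorem stmt_18 (I : Set ℝ) (hI : MeasurableSet I) (hIfin : volume I < ⊤)
    (u : ℝ → ℝ) (A lam : ℝ) (hlam : 0 < lam)
    (hint : ∀ t : ℝ, IntegrableOn (fun x => u x ^ 2 * Real.exp (t ^ 2 * u x ^ 2 / 2)) I)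
    (hint2 : IntegrableOn (fun x => u x ^ 2) I)
    (hint4 : IntegrableOn (fun x => u x ^ 4) I)
    (hu4 : 0 < ∫ x in I, u x ^ 4)
    (hA : lam * ∫ x in I, u x ^ 2 < A)
    (f : ℝ → ℝ)
    (hf : f = fun t => t ^ 2 * (A - lam * ∫ x in I, u x ^ 2 * Real.exp (t ^ 2 * u x ^ 2 / 2))) :
    (∃ ε > (0:ℝ), ∀ t ∈ Set.Ioo (0:ℝ) ε, 0 < f t) ∧
    Tendsto f atTop atBot ∧
    StrictMonoOn (fun t => ∫ x in I, u x ^ 2 * Real.exp (t ^ 2 * u x ^ 2 / 2)) (Set.Ioi 0) ∧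
    ∃! t₀ : ℝ, 0 < t₀ ∧ f t₀ = 0 :=
  stmt_18_general I u A lam hlam hint hint4 hu4 hA f hf
end
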